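/- Let σ, δ ∈ (0,1). There exists c > 0 such that for all sufficiently large n the following holds: if R ⊆ {0,1}^n is a set such that for every subset S ⊆ [n] of size ⌈σn⌉, the projection of R onto the coordinates outside S has size at most (1−δ)·2^{n−|S|}, then |R| ≤ n^{−c}·2^n. -/

import Mathlib

/-!
Freeing a coordinate `i` turns the cylinder `C_T` of points that agree with some point of `R`
outside `T` into `C_T ∪ flip_i(C_T)`, whose density exceeds that of `C_T` by half the influence
of `i` on the indicator of `C_T`. By the Kahn–Kalai–Linial theorem some coordinate has influence
at least `β (1 - β) log n / (4 n)` on a set of density `β`, so while `β ≤ 1 - δ` each freed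
coordinate multiplies the density by `1 + δ log n / (8 n)`. The hypothesis keeps the density of
`C_T` below `1 - δ` for `⌈σ n⌉` steps, hence `|R| / 2^n ≤ (1 + δ log n / (8 n))^(-σ n)`, which is
at most `n^(-σ δ / 16)`.

KKL itself comes from Fourier analysis on the cube and the hypercontractive inequality
`‖T_ρ f‖₄ ≤ ‖f‖₂` for `ρ² ≤ 1/3`, proved by induction on the dimension (Bonami's lemma).
-/

open Finset Real Filter
open scoped BigOperators

namespace BooleanCube

lemma expect_bool (g : Bool → ℝ) : 𝔼 b, g b = (g false + g true) / 2 := by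
  rw [Fintype.expect_eq_sum_div_card, Fintype.sum_bool, Fintype.card_bool, add_comm]
  norm_num

lemma expect_prod_eq_prod_expect {ι α : Type*} [Fintype ι] [DecidableEq ι] [Fintype α]
    (g : ι → α → ℝ) : 𝔼 x : ι → α, ∏ i, g i (x i) = ∏ i, 𝔼 a, g i a := by
  simp only [Fintype.expect_eq_sum_div_card, Fintype.card_fun, ← Fintype.prod_sum, Nat.cast_pow,
    prod_div_distrib, prod_const, card_univ]

lemma expect_fin_cons {α : Type*} [Fintype α] {n : ℕ} (F : (Fin (n + 1) → α) → ℝ) :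
    𝔼 x, F x = 𝔼 a, 𝔼 x : Fin n → α, F (Fin.cons a x) := by
  rw [← expect_product', ← Fintype.expect_equiv (Fin.consEquiv fun _ => α)
    (fun p => F (Fin.cons p.1 p.2)) F fun _ => rfl]
  rfl

lemma expect_fin_zero {α : Type*} [Fintype α] (F : (Fin 0 → α) → ℝ) (x : Fin 0 → α) :
    𝔼 y, F y = F x := by
  simp [Subsingleton.elim _ x]

lemma le_exp_neg_of_one_add_pow_mul_le {ε α : ℝ} {k : ℕ} (hε0 : 0 ≤ ε) (hε1 : ε ≤ 1)
    (hα : 0 ≤ α) (h : (1 + ε) ^ k * α ≤ 1) : α ≤ exp (-(k * ε / 2)) := by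
  have hlog : ε / 2 ≤ log (1 + ε) := by
    refine le_trans ?_ (one_sub_inv_le_log_of_pos (by linarith))
    rw [show 1 - (1 + ε)⁻¹ = ε / (1 + ε) by field_simp; ring]
    exact div_le_div_of_nonneg_left hε0 (by linarith) (by linarith)
  have hexp : exp (k * ε / 2) ≤ (1 + ε) ^ k := by
    rw [← exp_log (by linarith : 0 < 1 + ε), ← exp_nat_mul, mul_div_assoc]
    exact exp_le_exp.2 (mul_le_mul_of_nonneg_left hlog k.cast_nonneg)
  rw [exp_neg, ← one_div, le_div_iff₀ (exp_pos _)]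
  nlinarith [mul_le_mul_of_nonneg_right hexp hα]

noncomputable section

variable {n : ℕ}

def sgn (b : Bool) : ℝ := cond b (-1) 1

@[simp] lemma sgn_false : sgn false = 1 := rfl

@[simp] lemma sgn_true : sgn true = -1 := rfl

def walsh (S : Finset (Fin n)) (x : Fin n → Bool) : ℝ := ∏ i ∈ S, sgn (x i)

def fourier (f : (Fin n → Bool) → ℝ) (S : Finset (Fin n)) : ℝ := 𝔼 x, f x * walsh S x

lemma walsh_eq_prod_univ (S : Finset (Fin n)) (x : Fin n → Bool) :
    walsh S x = ∏ i, if i ∈ S then sgn (x i) else 1 := by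
  rw [walsh, prod_ite_mem, univ_inter]

lemma fourier_empty (f : (Fin n → Bool) → ℝ) : fourier f ∅ = 𝔼 x, f x := by
  simp [fourier, walsh]

lemma sum_walsh_mul_walsh (x y : Fin n → Bool) :
    ∑ S, walsh S x * walsh S y = if x = y then 2 ^ n else 0 := by
  have h : ∀ i, 1 + sgn (x i) * sgn (y i) = if x i = y i then 2 else 0 := by
    intro i; cases x i <;> cases y i <;> norm_num
  simp only [walsh, ← prod_mul_distrib, ← powerset_univ, ← prod_one_add, h]
  simp [prod_ite_zero, funext_iff]

theorem expect_mul_eq_sum_fourier_mul (f g : (Fin n → Bool) → ℝ) :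
    𝔼 x, f x * g x = ∑ S, fourier f S * fourier g S := by
  have h : ∀ x, 𝔼 y, f x * g y * (if x = y then (2 : ℝ) ^ n else 0) = f x * g x := by
    intro x
    simp only [mul_ite, mul_zero, Fintype.expect_eq_sum_div_card, Fintype.sum_ite_eq]
    simp
  calc 𝔼 x, f x * g x = 𝔼 x, 𝔼 y, ∑ S, f x * walsh S x * (g y * walsh S y) := by
        simp only [← h, ← sum_walsh_mul_walsh, mul_sum]
        congr! 3 with x - y - S
        ring
    _ = ∑ S, fourier f S * fourier g S := by
        simp only [fourier, expect_mul_expect, expect_sum_comm]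

def noiseKernel (ρ : ℝ) (x y : Fin n → Bool) : ℝ := ∏ i, (1 + ρ * (sgn (x i) * sgn (y i)))

def noise (ρ : ℝ) (f : (Fin n → Bool) → ℝ) (x : Fin n → Bool) : ℝ :=
  𝔼 y, f y * noiseKernel ρ x y

lemma expect_noiseKernel_mul_walsh (ρ : ℝ) (S : Finset (Fin n)) (y : Fin n → Bool) :
    𝔼 x, noiseKernel ρ x y * walsh S x = ρ ^ #S * walsh S y := by
  have h : ∀ i, 𝔼 b, (1 + ρ * (sgn b * sgn (y i))) * (if i ∈ S then sgn b else 1)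
      = if i ∈ S then ρ * sgn (y i) else 1 := by
    intro i; rw [expect_bool]; split_ifs <;> cases y i <;> simp <;> ring
  simp only [noiseKernel, walsh_eq_prod_univ, ← prod_mul_distrib]
  rw [expect_prod_eq_prod_expect
    (fun i b => (1 + ρ * (sgn b * sgn (y i))) * if i ∈ S then sgn b else 1)]
  simp only [h, prod_ite_mem, univ_inter, prod_mul_distrib, prod_const]

lemma fourier_noise (ρ : ℝ) (f : (Fin n → Bool) → ℝ) (S : Finset (Fin n)) :
    fourier (noise ρ f) S = ρ ^ #S * fourier f S := by
  simp only [fourier, noise, expect_mul, mul_assoc]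
  rw [expect_comm]
  simp only [← mul_expect, expect_noiseKernel_mul_walsh]
  rw [mul_expect]
  exact expect_congr rfl fun x _ => mul_left_comm _ _ _

lemma exists_fin_cons_eq_add_sgn_mul (f : (Fin (n + 1) → Bool) → ℝ) :
    ∃ g h : (Fin n → Bool) → ℝ, ∀ b x, f (Fin.cons b x) = g x + sgn b * h x :=
  ⟨fun x => (f (Fin.cons false x) + f (Fin.cons true x)) / 2,
    fun x => (f (Fin.cons false x) - f (Fin.cons true x)) / 2,
    fun b x => by cases b <;> simp <;> ring⟩

section FinCons

variable {f : (Fin (n + 1) → Bool) → ℝ} {g h : (Fin n → Bool) → ℝ}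

lemma noise_fin_cons (ρ : ℝ) (hf : ∀ b x, f (Fin.cons b x) = g x + sgn b * h x) (b : Bool)
    (x : Fin n → Bool) : noise ρ f (Fin.cons b x) = noise ρ g x + ρ * sgn b * noise ρ h x := by
  rw [noise, expect_fin_cons, expect_bool]
  simp only [hf, noiseKernel, Fin.prod_univ_succ, Fin.cons_zero, Fin.cons_succ, noise, mul_expect,
    ← expect_add_distrib, expect_div]
  refine expect_congr rfl fun y _ => ?_
  cases b <;> simp <;> ring

lemma expect_sq_fin_cons (hf : ∀ b x, f (Fin.cons b x) = g x + sgn b * h x) :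
    𝔼 x, f x ^ 2 = 𝔼 x, g x ^ 2 + 𝔼 x, h x ^ 2 := by
  simp only [expect_fin_cons (fun x => f x ^ 2), hf, ← expect_add_distrib]
  rw [expect_comm]
  refine expect_congr rfl fun x _ => ?_
  rw [expect_bool]; simp; ring

lemma expect_noise_pow_four_fin_cons (ρ : ℝ) (hf : ∀ b x, f (Fin.cons b x) = g x + sgn b * h x) :
    𝔼 x, noise ρ f x ^ 4 = 𝔼 x, noise ρ g x ^ 4
      + 6 * ρ ^ 2 * 𝔼 x, noise ρ g x ^ 2 * noise ρ h x ^ 2 + ρ ^ 4 * 𝔼 x, noise ρ h x ^ 4 := by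
  simp only [expect_fin_cons (fun x => noise ρ f x ^ 4), noise_fin_cons ρ hf, mul_expect,
    ← expect_add_distrib]
  rw [expect_comm]
  refine expect_congr rfl fun x _ => ?_
  rw [expect_bool]; simp; ring

end FinCons

theorem expect_noise_pow_four_le {ρ : ℝ} (hρ : ρ ^ 2 ≤ 1 / 3) :
    ∀ {n : ℕ} (f : (Fin n → Bool) → ℝ), 𝔼 x, noise ρ f x ^ 4 ≤ (𝔼 x, f x ^ 2) ^ 2
  | 0, f => by
    have h : ∀ x, noise ρ f x = f x := fun x => by
      rw [noise, expect_fin_zero _ x]; simp [noiseKernel]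
    simp only [h, expect_fin_zero _ default]
    exact le_of_eq (by ring)
  | n + 1, f => by
    obtain ⟨g, h, hf⟩ := exists_fin_cons_eq_add_sgn_mul f
    rw [expect_noise_pow_four_fin_cons ρ hf, expect_sq_fin_cons hf]
    set A := noise ρ g
    set B := noise ρ h
    have hA := expect_noise_pow_four_le hρ g
    have hB := expect_noise_pow_four_le hρ h
    have hB0 : 0 ≤ 𝔼 x, B x ^ 4 := expect_nonneg fun x _ => by positivity
    have hAB0 : 0 ≤ 𝔼 x, A x ^ 2 * B x ^ 2 := expect_nonneg fun x _ => by positivity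
    have hAB : 𝔼 x, A x ^ 2 * B x ^ 2 ≤ (𝔼 x, g x ^ 2) * 𝔼 x, h x ^ 2 := by
      have hcs := expect_mul_sq_le_sq_mul_sq univ (fun x => A x ^ 2) (fun x => B x ^ 2)
      simp only [← pow_mul, Nat.reduceMul] at hcs
      refine le_of_pow_le_pow_left₀ two_ne_zero ?_ (hcs.trans ?_)
      · exact mul_nonneg (expect_nonneg fun x _ => sq_nonneg _)
          (expect_nonneg fun x _ => sq_nonneg _)
      · rw [mul_pow]; exact mul_le_mul hA hB hB0 (sq_nonneg _)
    have hρ4 : ρ ^ 4 ≤ 1 := by nlinarith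
    -- `6 ρ² ≤ 2` and `ρ⁴ ≤ 1` bound the expansion by `(𝔼 g² + 𝔼 h²)²`
    nlinarith [mul_le_mul_of_nonneg_right hρ4 hB0]

def flipBit (i : Fin n) (x : Fin n → Bool) : Fin n → Bool := Function.update x i (!x i)

lemma flipBit_involutive (i : Fin n) : Function.Involutive (flipBit i) := fun x => by
  simp [flipBit]

lemma expect_comp_flipBit (i : Fin n) (F : (Fin n → Bool) → ℝ) :
    𝔼 x, F (flipBit i x) = 𝔼 x, F x :=
  Fintype.expect_equiv (flipBit_involutive i).toPerm _ _ fun _ => rfl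

lemma sgn_flipBit (i j : Fin n) (x : Fin n → Bool) :
    sgn (flipBit i x j) = (if j = i then -1 else 1) * sgn (x j) := by
  by_cases h : j = i
  · subst h
    simp only [flipBit, Function.update_self, if_true]
    cases x j <;> simp
  · simp [flipBit, h]

lemma walsh_flipBit (i : Fin n) (S : Finset (Fin n)) (x : Fin n → Bool) :
    walsh S (flipBit i x) = (if i ∈ S then -1 else 1) * walsh S x := by
  simp only [walsh, sgn_flipBit, prod_mul_distrib, prod_ite_eq']

def laplacian (i : Fin n) (f : (Fin n → Bool) → ℝ) (x : Fin n → Bool) : ℝ :=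
  (f x - f (flipBit i x)) / 2

lemma fourier_laplacian (i : Fin n) (f : (Fin n → Bool) → ℝ) (S : Finset (Fin n)) :
    fourier (laplacian i f) S = if i ∈ S then fourier f S else 0 := by
  have h : 𝔼 x, f (flipBit i x) * walsh S x = (if i ∈ S then -1 else 1) * fourier f S := by
    rw [← expect_comp_flipBit i, fourier, mul_expect]
    simp only [flipBit_involutive i _, walsh_flipBit]
    exact expect_congr rfl fun x _ => by ring
  simp only [fourier, laplacian, sub_mul, div_mul_eq_mul_div, ← expect_div, expect_sub_distrib, h]
  split_ifs <;> ring

def influence (i : Fin n) (f : (Fin n → Bool) → ℝ) : ℝ := 𝔼 x, (f x - f (flipBit i x)) ^ 2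

lemma influence_nonneg (i : Fin n) (f : (Fin n → Bool) → ℝ) : 0 ≤ influence i f :=
  expect_nonneg fun _ _ => sq_nonneg _

lemma influence_eq_four_mul_expect_laplacian_sq (i : Fin n) (f : (Fin n → Bool) → ℝ) :
    influence i f = 4 * 𝔼 x, laplacian i f x * laplacian i f x := by
  rw [influence, mul_expect]
  exact expect_congr rfl fun x _ => by rw [laplacian]; ring

lemma influence_eq_sum_fourier_sq (i : Fin n) (f : (Fin n → Bool) → ℝ) :
    influence i f = 4 * ∑ S, if i ∈ S then fourier f S ^ 2 else 0 := by
  simp only [influence_eq_four_mul_expect_laplacian_sq, expect_mul_eq_sum_fourier_mul,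
    fourier_laplacian]
  exact congrArg _ (sum_congr rfl fun S _ => by split_ifs <;> ring)

lemma sum_influence_eq (f : (Fin n → Bool) → ℝ) :
    ∑ i, influence i f = 4 * ∑ S, (#S : ℝ) * fourier f S ^ 2 := by
  simp only [influence_eq_sum_fourier_sq, ← mul_sum]
  rw [sum_comm]
  simp only [sum_ite_mem, univ_inter, sum_const, nsmul_eq_mul]

lemma variance_eq_sum_fourier_sq {f : (Fin n → Bool) → ℝ} (hf : ∀ x, f x = 0 ∨ f x = 1) :
    (𝔼 x, f x) * (1 - 𝔼 x, f x) = ∑ S ∈ univ.erase ∅, fourier f S ^ 2 := by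
  have hsq : 𝔼 x, f x * f x = 𝔼 x, f x :=
    expect_congr rfl fun x _ => by rcases hf x with h | h <;> simp [h]
  rw [sum_erase_eq_sub (mem_univ _), fourier_empty]
  simp only [sq, ← expect_mul_eq_sum_fourier_mul, hsq]
  ring

/-- `g` takes values in `{0, ±1/2}`, so `4 g²` is the indicator of its support; two
Cauchy–Schwarz steps then do the work of Hölder's inequality with exponents `(4/3, 4)`. -/
lemma expect_mul_noise_pow_four_le {ρ : ℝ} (hρ : ρ ^ 2 ≤ 1 / 3) {g : (Fin n → Bool) → ℝ}
    (hg : ∀ x, 4 * g x ^ 3 = g x) :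
    (𝔼 x, g x * noise ρ g x) ^ 4 ≤ 4 * (𝔼 x, g x ^ 2) ^ 5 := by
  set T := noise ρ g
  set m := 𝔼 x, g x ^ 2
  set Y := 𝔼 x, g x ^ 2 * T x ^ 2
  have h1 : (𝔼 x, g x * T x) ^ 2 ≤ 4 * m * Y := by
    have hcs := expect_mul_sq_le_sq_mul_sq univ (fun x => 4 * g x ^ 2) (fun x => g x * T x)
    have e1 : 𝔼 x, 4 * g x ^ 2 * (g x * T x) = 𝔼 x, g x * T x :=
      expect_congr rfl fun x _ => by linear_combination T x * hg x
    have e2 : 𝔼 x, (4 * g x ^ 2) ^ 2 = 4 * m := by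
      rw [mul_expect]; exact expect_congr rfl fun x _ => by linear_combination 4 * g x * hg x
    have e3 : 𝔼 x, (g x * T x) ^ 2 = Y := expect_congr rfl fun x _ => by ring
    rwa [e1, e2, e3] at hcs
  have h2 : Y ^ 2 ≤ m / 4 * m ^ 2 := by
    have hcs := expect_mul_sq_le_sq_mul_sq univ (fun x => g x ^ 2) (fun x => T x ^ 2)
    have e1 : 𝔼 x, (g x ^ 2) ^ 2 = m / 4 := by
      rw [expect_div]; exact expect_congr rfl fun x _ => by linear_combination g x / 4 * hg x
    rw [e1] at hcs
    simp only [← pow_mul, Nat.reduceMul] at hcs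
    exact hcs.trans (by gcongr; exact expect_noise_pow_four_le hρ g)
  calc (𝔼 x, g x * T x) ^ 4 = ((𝔼 x, g x * T x) ^ 2) ^ 2 := by ring
    _ ≤ (4 * m * Y) ^ 2 := pow_le_pow_left₀ (sq_nonneg _) h1 2
    _ = 16 * m ^ 2 * Y ^ 2 := by ring
    _ ≤ 16 * m ^ 2 * (m / 4 * m ^ 2) := by gcongr
    _ = 4 * m ^ 5 := by ring

lemma four_mul_laplacian_pow_three {f : (Fin n → Bool) → ℝ} (hf : ∀ x, f x = 0 ∨ f x = 1)
    (i : Fin n) (x : Fin n → Bool) : 4 * laplacian i f x ^ 3 = laplacian i f x := by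
  rcases hf x with h | h <;> rcases hf (flipBit i x) with h' | h' <;> norm_num [laplacian, h, h']

lemma sum_pow_card_mul_fourier_sq_pow_four_le {f : (Fin n → Bool) → ℝ}
    (hf : ∀ x, f x = 0 ∨ f x = 1) {ρ : ℝ} (hρ : ρ ^ 2 ≤ 1 / 3) (i : Fin n) :
    (∑ S, if i ∈ S then ρ ^ #S * fourier f S ^ 2 else 0) ^ 4 ≤ influence i f ^ 5 / 256 := by
  have h : (∑ S, if i ∈ S then ρ ^ #S * fourier f S ^ 2 else 0)
      = 𝔼 x, laplacian i f x * noise ρ (laplacian i f) x := by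
    simp only [expect_mul_eq_sum_fourier_mul, fourier_noise, fourier_laplacian]
    exact sum_congr rfl fun S _ => by split_ifs <;> ring
  rw [h, influence_eq_four_mul_expect_laplacian_sq]
  refine (expect_mul_noise_pow_four_le hρ (four_mul_laplacian_pow_three hf i)).trans (le_of_eq ?_)
  simp only [sq]
  ring

lemma sum_card_mul_pow_card_mul_fourier_sq_le {f : (Fin n → Bool) → ℝ}
    (hf : ∀ x, f x = 0 ∨ f x = 1) {ρ : ℝ} (hρ : ρ ^ 2 ≤ 1 / 3) {η : ℝ} (hη : 0 ≤ η)
    (h : ∀ i, influence i f ≤ η ^ 4) :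
    ∑ S, #S * ρ ^ #S * fourier f S ^ 2 ≤ η * ∑ S, (#S : ℝ) * fourier f S ^ 2 := by
  have hlocal : ∀ i, (∑ S, if i ∈ S then ρ ^ #S * fourier f S ^ 2 else 0)
      ≤ η * influence i f / 4 := by
    intro i
    have hi := influence_nonneg i f
    refine le_of_pow_le_pow_left₀ four_ne_zero (by positivity)
      ((sum_pow_card_mul_fourier_sq_pow_four_le hf hρ i).trans ?_)
    have := mul_le_mul_of_nonneg_right (h i) (pow_nonneg hi 4)
    rw [div_pow, mul_pow]
    linarith
  calc ∑ S, #S * ρ ^ #S * fourier f S ^ 2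
      = ∑ i, ∑ S, if i ∈ S then ρ ^ #S * fourier f S ^ 2 else 0 := by
        rw [sum_comm]
        simp only [sum_ite_mem, univ_inter, sum_const, nsmul_eq_mul, mul_assoc]
    _ ≤ ∑ i, η * influence i f / 4 := sum_le_sum fun i _ => hlocal i
    _ = η * ∑ S, (#S : ℝ) * fourier f S ^ 2 := by
        rw [← sum_div, ← mul_sum, sum_influence_eq]; ring

lemma pow_le_mul_pow_add {ρ : ℝ} (hρ0 : 0 ≤ ρ) (hρ1 : ρ ≤ 1) {d k : ℕ} (hd : 0 < d)
    (hk : 0 < k) : ρ ^ d ≤ k * ρ ^ k + ρ ^ d * k / d := by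
  have hk1 : (1 : ℝ) ≤ k := by exact_mod_cast hk
  rcases le_or_gt k d with hkd | hdk
  · have : ρ ^ d ≤ ρ ^ k := pow_le_pow_of_le_one hρ0 hρ1 hkd
    have : 0 ≤ ρ ^ d * k / d := by positivity
    nlinarith [pow_nonneg hρ0 k]
  · have : ρ ^ d ≤ ρ ^ d * k / d := by
      rw [le_div_iff₀ (by exact_mod_cast hd)]
      exact mul_le_mul_of_nonneg_left (by exact_mod_cast hdk.le) (by positivity)
    have : 0 ≤ k * ρ ^ k := by positivity
    linarith

lemma pow_mul_sum_erase_empty_le {ρ : ℝ} (hρ0 : 0 ≤ ρ) (hρ1 : ρ ≤ 1) {d : ℕ} (hd : 0 < d)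
    {a : Finset (Fin n) → ℝ} (ha : ∀ S, 0 ≤ a S) :
    ρ ^ d * ∑ S ∈ univ.erase ∅, a S
      ≤ ∑ S, #S * ρ ^ #S * a S + ρ ^ d * (∑ S, (#S : ℝ) * a S) / d := by
  rw [mul_sum, mul_sum, sum_div, ← sum_add_distrib]
  refine (sum_le_sum fun S hS => ?_).trans
    (sum_le_sum_of_subset_of_nonneg (erase_subset _ _) fun S _ _ => ?_)
  · have hS : 0 < #S := card_pos.2 (nonempty_iff_ne_empty.2 (ne_of_mem_erase hS))
    convert mul_le_mul_of_nonneg_right (pow_le_mul_pow_add hρ0 hρ1 hd hS) (ha S) using 1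
    ring
  · have := ha S
    positivity

/-- The Fourier weight of `f` above level `d` is at most `W / d`, where `W = ∑ |S| f̂(S)²`; at
levels `1, …, d` it is at most `ρ^(-d)` times the noise-damped weight, which hypercontractivity
bounds by `(ρ^d / d) W` when all influences are small. -/
theorem two_mul_variance_le_sum_influence {f : (Fin n → Bool) → ℝ}
    (hf : ∀ x, f x = 0 ∨ f x = 1) {ρ : ℝ} (hρ0 : 0 < ρ) (hρ : ρ ^ 2 ≤ 1 / 3) {d : ℕ}
    (hd : 0 < d) (h : ∀ i, influence i f ≤ (ρ ^ d / d) ^ 4) :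
    2 * d * ((𝔼 x, f x) * (1 - 𝔼 x, f x)) ≤ ∑ i, influence i f := by
  have hρ1 : ρ ≤ 1 := by nlinarith
  have hd' : (0 : ℝ) < d := by exact_mod_cast hd
  set W := ∑ S, (#S : ℝ) * fourier f S ^ 2
  have hupper := sum_card_mul_pow_card_mul_fourier_sq_le hf hρ (by positivity) h
  have hlower := pow_mul_sum_erase_empty_le hρ0.le hρ1 hd fun S => sq_nonneg (fourier f S)
  rw [variance_eq_sum_fourier_sq hf, sum_influence_eq]
  have : ρ ^ d * ∑ S ∈ univ.erase ∅, fourier f S ^ 2 ≤ ρ ^ d * (2 * W / d) := by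
    have : ρ ^ d / d * W + ρ ^ d * W / d = ρ ^ d * (2 * W / d) := by ring
    linarith
  have := le_of_mul_le_mul_left this (by positivity)
  rw [le_div_iff₀ hd'] at this
  linarith

lemma eventually_le_log : ∀ᶠ n : ℕ in atTop, 8 ≤ log n :=
  (tendsto_log_atTop.comp tendsto_natCast_atTop_atTop).eventually_ge_atTop 8

/-- With `d = ⌈log n / 8⌉`, the factor `e^(-4d)` is about `n^(-1/2)`, which beats `log n / n`
by a power of `n`. -/
lemma eventually_log_div_le : ∀ᶠ n : ℕ in atTop,
    log n / (16 * n) ≤ (exp (-1) ^ ⌈log n / 8⌉₊ / ⌈log n / 8⌉₊) ^ 4 := by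
  have hlittle : ∀ᶠ x : ℝ in atTop, log x ^ 5 ≤ 16 * exp (-4) * x ^ (1 / 2 : ℝ) := by
    filter_upwards [(isLittleO_log_rpow_rpow_atTop 5 (by norm_num : (0 : ℝ) < 1 / 2)).bound
      (by positivity : (0 : ℝ) < 16 * exp (-4)), eventually_ge_atTop 0] with x hx hx0
    simpa [abs_of_nonneg (rpow_nonneg hx0 _)] using (le_abs_self _).trans hx
  filter_upwards [tendsto_natCast_atTop_atTop.eventually hlittle, eventually_le_log]
    with n hbound hL
  set L := log n
  set d := ⌈L / 8⌉₊
  have hn : (0 : ℝ) < n := by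
    by_contra h
    norm_num [L, le_antisymm (not_lt.1 h) n.cast_nonneg] at hL
  have hd : 0 < d := Nat.ceil_pos.2 (by positivity)
  have hdL : (d : ℝ) < L / 8 + 1 := Nat.ceil_lt_add_one (by positivity)
  have hkey : L ^ 5 ≤ 16 * exp (-4) * exp (L / 2) := by
    rw [rpow_def_of_pos hn] at hbound
    convert hbound using 3; ring
  have hexp : exp (-(L / 8 + 1)) ^ 4 * exp L = exp (-4) * exp (L / 2) := by
    rw [← exp_nat_mul, ← exp_add, ← exp_add]; ring_nf
  calc L / (16 * n) ≤ (exp (-(L / 8 + 1)) / L) ^ 4 := by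
        rw [div_pow, div_le_div_iff₀ (by positivity) (by positivity), ← exp_log hn]
        nlinarith
    _ ≤ (exp (-1) ^ d / d) ^ 4 := by
        rw [← exp_nat_mul]
        gcongr
        · linarith
        · linarith

lemma exp_neg_one_sq_le : exp (-1) ^ 2 ≤ 1 / 3 := by
  have h : 3 ≤ exp 2 := by linarith [add_one_le_exp 2]
  rw [← exp_nat_mul, show ((2 : ℕ) : ℝ) * -1 = -2 by norm_num, exp_neg, one_div]
  exact inv_anti₀ (by norm_num) h

theorem kahn_kalai_linial : ∀ᶠ n : ℕ in atTop, ∀ f : (Fin n → Bool) → ℝ,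
    (∀ x, f x = 0 ∨ f x = 1) →
      ∃ i, (𝔼 x, f x) * (1 - 𝔼 x, f x) * log n / (4 * n) ≤ influence i f := by
  filter_upwards [eventually_log_div_le, eventually_le_log] with n hnum hL f hf
  set L := log n
  set d := ⌈L / 8⌉₊
  set V := (𝔼 x, f x) * (1 - 𝔼 x, f x)
  have hn : 0 < n := by
    by_contra h
    norm_num [L, Nat.eq_zero_of_not_pos h] at hL
  have hd : 0 < d := Nat.ceil_pos.2 (by positivity)
  have hdL : L / 8 ≤ d := Nat.le_ceil _
  have hV0 : 0 ≤ V := by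
    rw [show V = _ from variance_eq_sum_fourier_sq hf]; exact sum_nonneg fun S _ => sq_nonneg _
  have hV : V ≤ 1 / 4 := by nlinarith [sq_nonneg (𝔼 x, f x - 1 / 2)]
  -- if all influences are below `V L / (4 n)`, the total influence is below `V L / 4 ≤ 2 d V`
  by_contra! hsmall
  have hθ : V * L / (4 * n) ≤ (exp (-1) ^ d / d) ^ 4 := by
    refine le_trans ?_ hnum
    rw [div_le_div_iff₀ (by positivity) (by positivity)]
    nlinarith [mul_le_mul_of_nonneg_right hV (by positivity : 0 ≤ L * n)]
  have htotal := two_mul_variance_le_sum_influence hf (exp_pos (-1)) exp_neg_one_sq_le hd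
    fun i => (hsmall i).le.trans hθ
  have hsum : ∑ i, influence i f < n * (V * L / (4 * n)) := by
    simpa using sum_lt_sum_of_nonempty (univ_nonempty_iff.2 ⟨⟨0, hn⟩⟩) fun i _ => hsmall i
  rw [show (n : ℝ) * (V * L / (4 * n)) = V * L / 4 by field_simp] at hsum
  nlinarith [mul_le_mul_of_nonneg_right hdL hV0]

lemma expect_indicator_coe (A : Finset (Fin n → Bool)) :
    𝔼 x, (A : Set (Fin n → Bool)).indicator 1 x = (#A : ℝ) / 2 ^ n := by
  classical
  simp [Fintype.expect_eq_sum_div_card, Set.indicator_apply]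

lemma expect_indicator_eq_add_influence {A B : Set (Fin n → Bool)} {i : Fin n}
    (hB : ∀ x, x ∈ B ↔ x ∈ A ∨ flipBit i x ∈ A) :
    𝔼 x, B.indicator (1 : (Fin n → Bool) → ℝ) x
      = 𝔼 x, A.indicator 1 x + influence i (A.indicator 1) / 2 := by
  classical
  have h : ∀ x, B.indicator (1 : (Fin n → Bool) → ℝ) x
      = (A.indicator 1 x + A.indicator 1 (flipBit i x)) / 2
        + (A.indicator 1 x - A.indicator (1 : (Fin n → Bool) → ℝ) (flipBit i x)) ^ 2 / 2 := by
    intro x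
    by_cases hx : x ∈ A <;> by_cases hfx : flipBit i x ∈ A <;> simp [hB, hx, hfx] <;> norm_num
  simp only [h, influence, expect_add_distrib, ← expect_div, expect_comp_flipBit]
  ring

def cylinder (T : Finset (Fin n)) (R : Finset (Fin n → Bool)) : Set (Fin n → Bool) :=
  {x | ∃ y ∈ R, ∀ i ∉ T, x i = y i}

lemma cylinder_empty (R : Finset (Fin n → Bool)) : cylinder ∅ R = R := by
  ext x
  simp [cylinder, ← funext_iff]

lemma cylinder_mono {T T' : Finset (Fin n)} (h : T ⊆ T') (R : Finset (Fin n → Bool)) :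
    cylinder T R ⊆ cylinder T' R := fun _ ⟨y, hy, hxy⟩ =>
  ⟨y, hy, fun i hi => hxy i fun hiT => hi (h hiT)⟩

lemma mem_cylinder_insert {i : Fin n} {T : Finset (Fin n)} {R : Finset (Fin n → Bool)}
    {x : Fin n → Bool} :
    x ∈ cylinder (insert i T) R ↔ x ∈ cylinder T R ∨ flipBit i x ∈ cylinder T R := by
  constructor
  · rintro ⟨y, hy, hxy⟩
    have hxy' : ∀ j ∉ T, j ≠ i → x j = y j := fun j hj hji => hxy j (by simp [hji, hj])
    by_cases hxi : x i = y i
    · exact .inl ⟨y, hy, fun j hj => if hji : j = i then hji ▸ hxi else hxy' j hj hji⟩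
    · refine .inr ⟨y, hy, fun j hj => ?_⟩
      by_cases hji : j = i
      · subst hji
        simp only [flipBit, Function.update_self]
        revert hxi; cases x j <;> cases y j <;> simp
      · simp [flipBit, hji, hxy' j hj hji]
  · rintro (hx | ⟨y, hy, hxy⟩)
    · exact cylinder_mono (subset_insert i T) R hx
    · refine ⟨y, hy, fun j hj => ?_⟩
      rw [mem_insert, not_or] at hj
      simpa [flipBit, hj.1] using hxy j hj.2

lemma expect_indicator_cylinder (S : Finset (Fin n)) (R : Finset (Fin n → Bool)) :
    𝔼 x, (cylinder S R).indicator 1 x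
      = ((R.image (fun x (i : {i : Fin n // i ∉ S}) => x i.1)).card : ℝ) * 2 ^ #S / 2 ^ n := by
  classical
  set I := R.image (fun x (i : {i : Fin n // i ∉ S}) => x i.1)
  have hcyl : cylinder S R
      = ↑(univ.filter fun x : Fin n → Bool => (fun i : {i : Fin n // i ∉ S} => x i.1) ∈ I) := by
    ext x
    simp [I, cylinder, funext_iff, eq_comm]
  rw [hcyl, expect_indicator_coe, card_equiv (Equiv.piEquivPiSubtypeProd (· ∉ S) fun _ => Bool)
    (t := I ×ˢ univ) (by simp), card_product, card_univ]
  simp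

lemma expect_indicator_cylinder_le {R : Finset (Fin n → Bool)} {k : ℕ} (hk : k ≤ n) {δ : ℝ}
    (hR : ∀ S : Finset (Fin n), S.card = k →
      ((R.image (fun x (i : {i : Fin n // i ∉ S}) => x i.1)).card : ℝ) ≤ (1 - δ) * 2 ^ (n - S.card))
    (T : Finset (Fin n)) (hT : #T ≤ k) : 𝔼 x, (cylinder T R).indicator 1 x ≤ 1 - δ := by
  obtain ⟨S, hTS, -, hS⟩ := exists_subsuperset_card_eq (subset_univ T) hT (by simpa using hk)
  calc 𝔼 x, (cylinder T R).indicator 1 x ≤ 𝔼 x, (cylinder S R).indicator 1 x :=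
        expect_le_expect fun x _ => Set.indicator_le_indicator_of_subset (cylinder_mono hTS R)
          (fun _ => zero_le_one) x
    _ ≤ (1 - δ) * 2 ^ (n - #S) * 2 ^ #S / 2 ^ n := by
        rw [expect_indicator_cylinder]; gcongr; exact hR S hS
    _ = 1 - δ := by
        rw [mul_assoc, ← pow_add, Nat.sub_add_cancel (hS ▸ hk)]; field_simp

lemma exists_expect_indicator_cylinder_insert_ge
    (hkkl : ∀ f : (Fin n → Bool) → ℝ, (∀ x, f x = 0 ∨ f x = 1) →
      ∃ i, (𝔼 x, f x) * (1 - 𝔼 x, f x) * log n / (4 * n) ≤ influence i f)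
    {δ : ℝ} (R : Finset (Fin n → Bool)) (T : Finset (Fin n))
    (hT : 𝔼 x, (cylinder T R).indicator 1 x ≤ 1 - δ) :
    ∃ i, (1 + δ * log n / (8 * n)) * 𝔼 x, (cylinder T R).indicator 1 x
      ≤ 𝔼 x, (cylinder (insert i T) R).indicator 1 x := by
  obtain ⟨i, hi⟩ := hkkl ((cylinder T R).indicator 1) fun x => by
    by_cases hx : x ∈ cylinder T R <;> simp [hx]
  refine ⟨i, ?_⟩
  rw [expect_indicator_eq_add_influence fun x => mem_cylinder_insert]
  set β : ℝ := 𝔼 x, (cylinder T R).indicator 1 x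
  have hβ : 0 ≤ β := expect_nonneg fun x _ => Set.indicator_nonneg (fun _ _ => zero_le_one) x
  have hL : 0 ≤ log n / (8 * n) := by have := log_natCast_nonneg n; positivity
  have hδβ : β * δ ≤ β * (1 - β) := mul_le_mul_of_nonneg_left (by linarith) hβ
  calc (1 + δ * log n / (8 * n)) * β = β + β * δ * (log n / (8 * n)) := by ring
    _ ≤ β + β * (1 - β) * (log n / (8 * n)) := by gcongr
    _ = β + β * (1 - β) * log n / (4 * n) / 2 := by ring
    _ ≤ β + influence i ((cylinder T R).indicator 1) / 2 := by gcongr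

lemma exists_card_le_and_expect_indicator_cylinder_ge
    (hkkl : ∀ f : (Fin n → Bool) → ℝ, (∀ x, f x = 0 ∨ f x = 1) →
      ∃ i, (𝔼 x, f x) * (1 - 𝔼 x, f x) * log n / (4 * n) ≤ influence i f)
    {δ : ℝ} (hδ : 0 ≤ δ) (R : Finset (Fin n → Bool)) {k : ℕ}
    (hR : ∀ T : Finset (Fin n), #T ≤ k → 𝔼 x, (cylinder T R).indicator 1 x ≤ 1 - δ) :
    ∀ t ≤ k, ∃ T : Finset (Fin n), #T ≤ t ∧
      (1 + δ * log n / (8 * n)) ^ t * 𝔼 x, (cylinder ∅ R).indicator 1 x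
        ≤ 𝔼 x, (cylinder T R).indicator 1 x
  | 0, _ => ⟨∅, by simp⟩
  | t + 1, ht => by
    obtain ⟨T, hTt, hT⟩ := exists_card_le_and_expect_indicator_cylinder_ge hkkl hδ R hR t (by omega)
    obtain ⟨i, hi⟩ := exists_expect_indicator_cylinder_insert_ge hkkl R T (hR T (by omega))
    refine ⟨insert i T, (card_insert_le i T).trans (by omega), ?_⟩
    have : 0 ≤ 1 + δ * log n / (8 * n) := by have := log_natCast_nonneg n; positivity
    rw [pow_succ, mul_comm _ (1 + _), mul_assoc]
    exact (mul_le_mul_of_nonneg_left hT this).trans hi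

lemma le_rpow_neg_of_one_add_pow_mul_le {n : ℕ} (hn : (0 : ℝ) < n) {σ δ α : ℝ} (hδ0 : 0 ≤ δ)
    (hδ1 : δ ≤ 1) (hα : 0 ≤ α)
    (h : (1 + δ * log n / (8 * n)) ^ ⌈σ * n⌉₊ * α ≤ 1) : α ≤ (n : ℝ) ^ (-(σ * δ / 16)) := by
  set ε := δ * log n / (8 * n)
  have hL := log_natCast_nonneg n
  have hε1 : ε ≤ 1 := by
    rw [div_le_one (by positivity)]
    nlinarith [log_le_sub_one_of_pos hn]
  have hexponent : σ * δ / 16 * log n ≤ ⌈σ * n⌉₊ * ε / 2 := by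
    have hσε : σ * n * ε = σ * δ * log n / 8 := by simp only [ε]; field_simp
    nlinarith [mul_le_mul_of_nonneg_right (Nat.le_ceil (σ * n)) (by positivity : 0 ≤ ε)]
  rw [rpow_def_of_pos hn]
  exact (le_exp_neg_of_one_add_pow_mul_le (by positivity) hε1 hα h).trans
    (exp_le_exp.2 (by linarith))

end

end BooleanCube

open BooleanCube

/-- KKL corollary: if every projection of `R ⊆ {0,1}^n` onto the complement of a
`⌈σn⌉`-size index set has relative size at most `1-δ`, then `R` has relative size at
most `n^{-c}`. -/
theorem stmt_0 (σ δ : ℝ) (hσ : σ ∈ Set.Ioo (0:ℝ) 1) (hδ : δ ∈ Set.Ioo (0:ℝ) 1) :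
    ∃ c : ℝ, 0 < c ∧ ∃ N : ℕ, ∀ n : ℕ, N ≤ n →
      ∀ R : Finset (Fin n → Bool),
        (∀ S : Finset (Fin n), S.card = ⌈σ * n⌉₊ →
          ((R.image (fun x (i : {i : Fin n // i ∉ S}) => x i.1)).card : ℝ)
            ≤ (1 - δ) * 2 ^ (n - S.card)) →
        (R.card : ℝ) ≤ (n : ℝ) ^ (-c) * 2 ^ n := by
  obtain ⟨hσ0, hσ1⟩ := hσ
  obtain ⟨hδ0, hδ1⟩ := hδ
  obtain ⟨N, hN⟩ := eventually_atTop.1 (kahn_kalai_linial.and (eventually_gt_atTop 0))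
  refine ⟨σ * δ / 16, by positivity, N, fun n hn R hR => ?_⟩
  obtain ⟨hkkl, hn0⟩ := hN n hn
  have hk : ⌈σ * n⌉₊ ≤ n := Nat.ceil_le.2 (by nlinarith)
  have hcyl := expect_indicator_cylinder_le hk hR
  obtain ⟨T, hTk, hT⟩ :=
    exists_card_le_and_expect_indicator_cylinder_ge hkkl hδ0.le R hcyl _ le_rfl
  rw [cylinder_empty, expect_indicator_coe] at hT
  have hdensity := le_rpow_neg_of_one_add_pow_mul_le (by exact_mod_cast hn0) hδ0.le hδ1.le
    (by positivity) (hT.trans ((hcyl T hTk).trans (by linarith)))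
  rwa [div_le_iff₀ (by positivity)] at hdensity
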